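/- Let f : ℝⁿ → ℝᵏ be 1-Lipschitz (with respect to the Euclidean norms) and let x ∈ ℝⁿ with true label l such that f(x)_l − max_{i≠l} f(x)_i > 0. Then for every perturbation δ with ‖δ‖₂ < (f(x)_l − max_{i≠l} f(x)_i)/√2, the perturbed prediction still satisfies f(x+δ)_l > f(x+δ)_i for all i ≠ l. -/
import Mathlib


open Finset

lemma two_coord_bound (k : ℕ) (z : EuclideanSpace ℝ (Fin k)) (i l : Fin k) (h : i ≠ l) :
    (z i)^2 + (z l)^2 ≤ ‖z‖^2 := by
  have hn : ‖z‖^2 = ∑ j, (z j)^2 := by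
    rw [EuclideanSpace.norm_eq, Real.sq_sqrt (by positivity)]
    simp [sq_abs]
  rw [hn]
  have : ({i, l} : Finset (Fin k)) ⊆ univ := subset_univ _
  calc (z i)^2 + (z l)^2 = ∑ j ∈ ({i, l} : Finset (Fin k)), (z j)^2 := by
        rw [Finset.sum_pair h]
    _ ≤ ∑ j, (z j)^2 := Finset.sum_le_sum_of_subset_of_nonneg this (by intros; positivity)

lemma add_le_sqrt_two_mul (a b : ℝ) : a + b ≤ Real.sqrt 2 * Real.sqrt (a^2 + b^2) := by
  have h2 : Real.sqrt 2 * Real.sqrt (a^2+b^2) = Real.sqrt (2*(a^2+b^2)) := by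
    rw [← Real.sqrt_mul (by norm_num)]
  rw [h2]
  rcases le_or_gt (a+b) 0 with h | h
  · exact h.trans (Real.sqrt_nonneg _)
  · rw [show a + b = Real.sqrt ((a+b)^2) from (Real.sqrt_sq h.le).symm]
    apply Real.sqrt_le_sqrt
    nlinarith [sq_nonneg (a-b)]

theorem certified_robustness_radius (n k : ℕ)
    (f : EuclideanSpace ℝ (Fin n) → EuclideanSpace ℝ (Fin k))
    (hf : LipschitzWith 1 f) (l : Fin k) (x : EuclideanSpace ℝ (Fin n))
    (hne : (Finset.univ.erase l).Nonempty)
    (hmargin : 0 < f x l - (Finset.univ.erase l).sup' hne fun i => f x i)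
    (δ : EuclideanSpace ℝ (Fin n))
    (hδ : ‖δ‖ < (f x l - (Finset.univ.erase l).sup' hne fun i => f x i) / Real.sqrt 2) :
    ∀ i : Fin k, i ≠ l → f (x + δ) i < f (x + δ) l := by
  intro i hi
  set M := (Finset.univ.erase l).sup' hne fun i => f x i with hM
  have hs2 : (0:ℝ) < Real.sqrt 2 := by positivity
  have hδ' : Real.sqrt 2 * ‖δ‖ < f x l - M := by
    rw [lt_div_iff₀ hs2] at hδ; linarith [hδ]
  have hfi : f x i ≤ M := Finset.le_sup' (f := fun j => f x j) (mem_erase.2 ⟨hi, mem_univ i⟩)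
  set z := f (x + δ) - f x with hz
  have hlip : ‖z‖ ≤ ‖δ‖ := by
    have := hf.dist_le_mul (x + δ) x
    simpa [hz, dist_eq_norm, add_sub_cancel_left] using this
  have hcoord : (z i) + (-(z l)) ≤ Real.sqrt 2 * ‖δ‖ := by
    have h1 : (z i)^2 + (z l)^2 ≤ ‖z‖^2 := two_coord_bound k z i l hi
    have h2 : (z i) + (-(z l)) ≤ Real.sqrt 2 * Real.sqrt ((z i)^2 + (-(z l))^2) :=
      add_le_sqrt_two_mul _ _
    have h3 : Real.sqrt ((z i)^2 + (-(z l))^2) ≤ ‖δ‖ := by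
      have : Real.sqrt ((z i)^2 + (-(z l))^2) ≤ Real.sqrt (‖z‖^2) := by
        apply Real.sqrt_le_sqrt; rw [neg_sq]; exact h1
      rw [Real.sqrt_sq (norm_nonneg z)] at this
      exact this.trans hlip
    calc z i + (-(z l)) ≤ Real.sqrt 2 * Real.sqrt ((z i)^2 + (-(z l))^2) := h2
      _ ≤ Real.sqrt 2 * ‖δ‖ := by
          exact mul_le_mul_of_nonneg_left h3 (le_of_lt hs2)
  have hzi : z i = f (x + δ) i - f x i := by simp [hz]
  have hzl : z l = f (x + δ) l - f x l := by simp [hz]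
  rw [hzi, hzl] at hcoord
  linarith
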